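/- arXiv:2210.03368 — 2 statements merged into one kernel-verified Lean document; each statement's English description precedes it below -/
import Mathlib

section
/- Suppose the ISS-Lyapunov assumption holds with class-K∞ functions α̲, ᾱ, α, γ₁,…,γ_N, θ. Let γ̃₁,…,γ̃_N be class-K∞ functions such that for each i, γᵢ(r) = O(γ̃ᵢ(r)) as r → ∞ (i.e., there exist Mᵢ > 0 and rᵢ ≥ 0 with γᵢ(r) ≤ Mᵢγ̃ᵢ(r) for all r ≥ rᵢ). Then there exist a continuously differentiable W : ℝ^{n_x}×ℝ^{n_z} → [0,∞) and class-K∞ functions α̲_W, ᾱ_W, α̃, θ̃ such that for all x, z, u, v and e = (e₁,…,e_N): α̲_W(|x−ψ(z)|) ≤ W(x,z) ≤ ᾱ_W(|ψ^{-R}(x)−z|) and ⟨∇W(x,z), (f_p(x,u,v), f_o(z,u,h(x)+e, h(ψ(z))))⟩ ≤ −α̃(W(x,z)) + Σ_{i=1}^N γ̃ᵢ(|eᵢ|) + θ̃(|v|). -/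
/-!
The new Lyapunov function is `W = ρ ∘ V` with `ρ s = ∫₀ˢ q`, for a continuous nondecreasing
weight `0 ≤ q ≤ 1` positive on `(0, ∞)`, so that `Ẇ = q(V) V̇`. Each weighted gain
`q(V) γᵢ(|eᵢ|)` is at most `γ̃ᵢ(|eᵢ|) + q(V) α(V) / (2N)`: either `γᵢ(|eᵢ|) ≤ α(V) / (2N)`;
or `|eᵢ| ≥ rᵢ` and `q ≤ 1 / Mᵢ`; or `|eᵢ|` lies between `γᵢ⁻¹(α(V) / (2N))` and `rᵢ`, where
`γᵢ` is bounded and `γ̃ᵢ ≥ γ̃ᵢ(γᵢ⁻¹(α(V) / (2N)))`, so it suffices that `q` be below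
`γ̃ᵢ ∘ γᵢ⁻¹ ∘ α / (2N)` up to a constant factor. What is left of the decay is `q(V) α(V) / 2`,
and since `ρ s ≤ q(s) s` it dominates `α̃(ρ(V))` for `α̃ t = min (q 1) t · α t / 2`.
-/

open Real Filter MeasureTheory

/-- A class-K∞ function: continuous, strictly increasing and unbounded on `[0,∞)`
with value `0` at `0`. -/
def ClassKInf (f : ℝ → ℝ) : Prop :=
  ContinuousOn f (Set.Ici 0) ∧ StrictMonoOn f (Set.Ici 0) ∧ f 0 = 0 ∧
  Filter.Tendsto f Filter.atTop Filter.atTop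

namespace ClassKInf

variable {f g : ℝ → ℝ}

lemma nonneg (hf : ClassKInf f) {r : ℝ} (hr : 0 ≤ r) : 0 ≤ f r :=
  hf.2.2.1 ▸ hf.2.1.monotoneOn Set.self_mem_Ici hr hr

lemma pos (hf : ClassKInf f) {r : ℝ} (hr : 0 < r) : 0 < f r :=
  hf.2.2.1 ▸ hf.2.1 Set.self_mem_Ici hr.le hr

lemma comp (hf : ClassKInf f) (hg : ClassKInf g) : ClassKInf (f ∘ g) :=
  ⟨hf.1.comp hg.1 fun _ hr => hg.nonneg hr,
    hf.2.1.comp hg.2.1 fun _ hr => hg.nonneg hr,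
    by simp [hg.2.2.1, hf.2.2.1], hf.2.2.2.comp hg.2.2.2⟩

lemma div_const (hf : ClassKInf f) {c : ℝ} (hc : 0 < c) : ClassKInf fun r => f r / c :=
  ⟨hf.1.div_const c, fun _ ha _ hb hab => div_lt_div_of_pos_right (hf.2.1 ha hb hab) hc,
    by simp [hf.2.2.1], hf.2.2.2.atTop_div_const hc⟩

lemma min_const_mul (hf : ClassKInf f) {c : ℝ} (hc : 0 < c) :
    ClassKInf fun r => min c r * f r := by
  refine ⟨(continuousOn_const.inf continuousOn_id).mul hf.1, ?_, by simp [hf.2.2.1], ?_⟩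
  · intro a ha b hb hab
    have hmin : 0 < min c b := lt_min hc (lt_of_le_of_lt ha hab)
    calc min c a * f a ≤ min c b * f a :=
          mul_le_mul_of_nonneg_right (min_le_min_left c hab.le) (hf.nonneg ha)
      _ < min c b * f b := mul_lt_mul_of_pos_left (hf.2.1 ha hb hab) hmin
  · refine (hf.2.2.2.const_mul_atTop hc).congr' ?_
    filter_upwards [eventually_ge_atTop c] with r hr
    rw [min_eq_left hr]

lemma finset_inf' {ι : Type*} {s : Finset ι} (hs : s.Nonempty) {f : ι → ℝ → ℝ}
    (hf : ∀ i ∈ s, ClassKInf (f i)) : ClassKInf fun r => s.inf' hs fun i => f i r := by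
  refine ⟨ContinuousOn.finset_inf'_apply hs fun i hi => (hf i hi).1, ?_, ?_, ?_⟩
  · intro a ha b hb hab
    refine (Finset.lt_inf'_iff hs).2 fun i hi => ?_
    exact (Finset.inf'_le _ hi).trans_lt ((hf i hi).2.1 ha hb hab)
  · exact le_antisymm ((Finset.inf'_le _ hs.choose_spec).trans_eq (hf _ hs.choose_spec).2.2.1)
      ((Finset.le_inf'_iff hs _).2 fun i hi => (hf i hi).2.2.1.ge)
  · refine tendsto_atTop.2 fun b => ?_
    filter_upwards [(Filter.eventually_all_finset s).2 fun i hi =>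
      tendsto_atTop.1 (hf i hi).2.2.2 b] with r hr
    exact (Finset.le_inf'_iff hs _).2 hr

lemma exists_rightInverse (hf : ClassKInf f) : ∃ g, ClassKInf g ∧ ∀ y, 0 ≤ y → f (g y) = y := by
  -- extended by the identity on `(-∞, 0]`, `f` becomes an order automorphism of `ℝ`
  set F : ℝ → ℝ := fun x => f (max x 0) + min x 0
  have hF_of_nonneg : ∀ x, 0 ≤ x → F x = f x := fun x hx => by simp [F, hx]
  have hF_of_nonpos : ∀ x, x ≤ 0 → F x = x := fun x hx => by simp [F, hx, hf.2.2.1]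
  have hFc : Continuous F :=
    (hf.1.comp_continuous (continuous_id.max continuous_const)
      fun x => Set.mem_Ici.2 (le_max_right x 0)).add (continuous_id.min continuous_const)
  have hFm : StrictMono F := by
    intro x y hxy
    rcases le_or_gt 0 x with hx | hx
    · rw [hF_of_nonneg x hx, hF_of_nonneg y (hx.trans hxy.le)]
      exact hf.2.1 hx (hx.trans hxy.le) hxy
    rcases le_or_gt y 0 with hy | hy
    · rwa [hF_of_nonpos x hx.le, hF_of_nonpos y hy]
    · rw [hF_of_nonpos x hx.le, hF_of_nonneg y hy.le]
      exact hx.trans (hf.2.2.1 ▸ hf.2.1 Set.self_mem_Ici hy.le hy)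
  have hFtop : Tendsto F atTop atTop :=
    hf.2.2.2.congr' <| (eventually_ge_atTop 0).mono fun x hx => (hF_of_nonneg x hx).symm
  have hFbot : Tendsto F atBot atBot :=
    tendsto_id.congr' <| (eventually_le_atBot 0).mono fun x hx => (hF_of_nonpos x hx).symm
  let e := hFm.orderIsoOfSurjective F (hFc.surjective hFtop hFbot)
  have hg0 : e.symm 0 = 0 := e.symm_apply_eq.2 (hF_of_nonpos 0 le_rfl).symm
  refine ⟨e.symm, ⟨e.symm.continuous.continuousOn, e.symm.strictMono.strictMonoOn _, hg0,
    e.symm.tendsto_atTop⟩, fun y hy => ?_⟩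
  rw [← hF_of_nonneg _ (hg0 ▸ e.symm.monotone hy)]
  exact e.apply_symm_apply y

lemma exists_weighted_gain_le {γ γt β : ℝ → ℝ} (hγ : ClassKInf γ) (hγt : ClassKInf γt)
    (hβ : ClassKInf β) {M r₀ : ℝ} (hM : 0 < M) (hdom : ∀ r ≥ r₀, γ r ≤ M * γt r) :
    ∃ κ, ClassKInf κ ∧ ∀ s a q, 0 ≤ s → 0 ≤ a → 0 ≤ q → q ≤ M⁻¹ → q ≤ κ s →
      q * γ a ≤ γt a + q * β s := by
  obtain ⟨γinv, hγinv, hγγinv⟩ := hγ.exists_rightInverse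
  set c := max (γ r₀) 1
  have hc : 0 < c := lt_max_of_lt_right one_pos
  refine ⟨fun s => γt (γinv (β s)) / c, (hγt.comp (hγinv.comp hβ)).div_const hc,
    fun s a q hs ha hq hqM hqκ => ?_⟩
  rcases le_or_gt (γ a) (β s) with hsmall | hlarge
  · exact (mul_le_mul_of_nonneg_left hsmall hq).trans (le_add_of_nonneg_left (hγt.nonneg ha))
  rcases le_or_gt r₀ a with hfar | hnear
  · have : q * γ a ≤ M⁻¹ * (M * γt a) :=
      mul_le_mul hqM (hdom a hfar) (hγ.nonneg ha) (inv_nonneg.2 hM.le)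
    rw [inv_mul_cancel_left₀ hM.ne'] at this
    exact this.trans (le_add_of_nonneg_right (mul_nonneg hq (hβ.nonneg hs)))
  have hw : 0 ≤ γinv (β s) := hγinv.nonneg (hβ.nonneg hs)
  have hwa : γinv (β s) < a := by
    rw [← hγ.2.1.lt_iff_lt hw ha, hγγinv _ (hβ.nonneg hs)]
    exact hlarge
  have hγc : γ a ≤ c :=
    (hγ.2.1.monotoneOn ha (ha.trans hnear.le) hnear.le).trans (le_max_left _ _)
  calc q * γ a ≤ γt (γinv (β s)) / c * c :=
        mul_le_mul hqκ hγc (hγ.nonneg ha) (div_nonneg (hγt.nonneg hw) hc.le)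
    _ = γt (γinv (β s)) := div_mul_cancel₀ _ hc.ne'
    _ ≤ γt a := hγt.2.1.monotoneOn hw ha hwa.le
    _ ≤ γt a + q * β s := le_add_of_nonneg_right (mul_nonneg hq (hβ.nonneg hs))

end ClassKInf

open Finset in
lemma exists_dissipation_weight {ι : Type*} [Fintype ι] [Nonempty ι] {γ γt : ι → ℝ → ℝ}
    {β : ℝ → ℝ} (hγ : ∀ i, ClassKInf (γ i)) (hγt : ∀ i, ClassKInf (γt i)) (hβ : ClassKInf β)
    (hO : ∀ i, ∃ M > 0, ∃ r₀, ∀ r ≥ r₀, γ i r ≤ M * γt i r) :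
    ∃ q : ℝ → ℝ, Continuous q ∧ Monotone q ∧ (∀ s, 0 ≤ q s) ∧ (∀ s, 0 < s → 0 < q s) ∧
      (∀ s, q s ≤ 1) ∧ ∀ s, 0 ≤ s → ∀ i a, 0 ≤ a → q s * γ i a ≤ γt i a + q s * β s := by
  choose M hM r₀ hdom using hO
  choose κ hκ hκle using fun i => (hγ i).exists_weighted_gain_le (hγt i) hβ (hM i) (hdom i)
  set κmin : ℝ → ℝ := fun r => univ.inf' univ_nonempty fun i => κ i r
  have hκmin : ClassKInf κmin := ClassKInf.finset_inf' univ_nonempty fun i _ => hκ i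
  set m := min 1 (univ.inf' univ_nonempty fun i => (M i)⁻¹)
  have hm : 0 < m := lt_min one_pos ((lt_inf'_iff _).2 fun i _ => inv_pos.2 (hM i))
  have hmax : ∀ s : ℝ, max s 0 ∈ Set.Ici 0 := fun s => le_max_right s 0
  refine ⟨fun s => min m (κmin (max s 0)),
    continuous_const.min (hκmin.1.comp_continuous (continuous_id.max continuous_const) hmax),
    fun s t hst => min_le_min_left m
      (hκmin.2.1.monotoneOn (hmax s) (hmax t) (max_le_max_right 0 hst)),
    fun s => le_min hm.le (hκmin.nonneg (hmax s)),
    fun s hs => lt_min hm (hκmin.pos (lt_max_of_lt_left hs)),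
    fun s => (min_le_left _ _).trans (min_le_left _ _),
    fun s hs i a ha => hκle i s a _ hs ha (le_min hm.le (hκmin.nonneg (hmax s))) ?_ ?_⟩
  · exact (min_le_left _ _).trans ((min_le_right _ _).trans (inf'_le _ (mem_univ i)))
  · show min m (κmin (max s 0)) ≤ κ i s
    rw [max_eq_left hs]
    exact (min_le_right _ _).trans (inf'_le _ (mem_univ i))

noncomputable def rescaling (q : ℝ → ℝ) (s : ℝ) : ℝ := ∫ t in (0 : ℝ)..s, q t

section rescaling

variable {q : ℝ → ℝ}

lemma hasDerivAt_rescaling (hq : Continuous q) (s : ℝ) : HasDerivAt (rescaling q) (q s) s :=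
  (hq.integral_hasStrictDerivAt 0 s).hasDerivAt

lemma deriv_rescaling (hq : Continuous q) : deriv (rescaling q) = q :=
  funext fun s => (hasDerivAt_rescaling hq s).deriv

lemma contDiff_rescaling (hq : Continuous q) : ContDiff ℝ 1 (rescaling q) :=
  contDiff_one_iff_deriv.2 ⟨fun s => (hasDerivAt_rescaling hq s).differentiableAt,
    (deriv_rescaling hq).symm ▸ hq⟩

lemma rescaling_le_mul (hq : Continuous q) (hqm : Monotone q) {s : ℝ} (hs : 0 ≤ s) :
    rescaling q s ≤ q s * s := by
  have := (convex_Icc 0 s).image_sub_le_mul_sub_of_deriv_le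
    (contDiff_rescaling hq).continuous.continuousOn
    (fun t _ => (hasDerivAt_rescaling hq t).differentiableAt.differentiableWithinAt)
    (fun t ht => by rw [deriv_rescaling hq]; exact hqm (interior_subset ht).2)
    0 ⟨le_rfl, hs⟩ s ⟨hs, le_rfl⟩ hs
  simpa [rescaling] using this

lemma classKInf_rescaling (hq : Continuous q) (hqm : Monotone q) (hqpos : ∀ s, 0 < s → 0 < q s) :
    ClassKInf (rescaling q) := by
  have hc : Continuous (rescaling q) := (contDiff_rescaling hq).continuous
  refine ⟨hc.continuousOn, strictMonoOn_of_deriv_pos (convex_Ici 0) hc.continuousOn ?_,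
    intervalIntegral.integral_same, ?_⟩
  · intro s hs
    rw [interior_Ici] at hs
    rw [deriv_rescaling hq]
    exact hqpos s hs
  · have hlin := (convex_Ici 1).mul_sub_le_image_sub_of_le_deriv hc.continuousOn
      (fun t _ => (hasDerivAt_rescaling hq t).differentiableAt.differentiableWithinAt)
      (fun t ht => by rw [deriv_rescaling hq]; exact hqm (interior_subset ht))
      1 Set.self_mem_Ici
    refine tendsto_atTop_mono' atTop ((eventually_ge_atTop 1).mono fun s hs => ?_)
      (tendsto_atTop_add_const_right _ (rescaling q 1)
        ((tendsto_atTop_add_const_right _ (-1) tendsto_id).const_mul_atTop (hqpos 1 one_pos)))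
    have := hlin s hs hs
    simp only [id]
    linarith

end rescaling

lemma min_mul_rescaling_le_mul {q α : ℝ → ℝ} (hq : Continuous q) (hqm : Monotone q)
    (hq0 : ∀ s, 0 ≤ q s) (hq1 : ∀ s, q s ≤ 1) (hα : ClassKInf α) {s : ℝ} (hs : 0 ≤ s) :
    min (q 1) (rescaling q s) * α (rescaling q s) ≤ q s * α s := by
  have hρ_le : rescaling q s ≤ q s * s := rescaling_le_mul hq hqm hs
  have hρ0 : 0 ≤ rescaling q s :=
    intervalIntegral.integral_nonneg hs fun t _ => hq0 t
  have hmin : min (q 1) (rescaling q s) ≤ q s := by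
    rcases le_total 1 s with h1 | h1
    · exact (min_le_left _ _).trans (hqm h1)
    · exact (min_le_right _ _).trans (hρ_le.trans (mul_le_of_le_one_right (hq0 s) h1))
  have hα_le : α (rescaling q s) ≤ α s :=
    hα.2.1.monotoneOn hρ0 hs (hρ_le.trans (mul_le_of_le_one_left hs (hq1 s)))
  exact mul_le_mul hmin hα_le (hα.nonneg hρ0) (hq0 s)

open Finset in
lemma weighted_dissipation_le {ι : Type*} [Fintype ι] [Nonempty ι] {q d A T : ℝ}
    {g gt : ι → ℝ} (hq0 : 0 ≤ q) (hq1 : q ≤ 1) (hT : 0 ≤ T) (hd : d ≤ -A + ∑ i, g i + T)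
    (hg : ∀ i, q * g i ≤ gt i + q * (A / (2 * Fintype.card ι))) :
    q * d ≤ -(q * A / 2) + ∑ i, gt i + T := by
  have hcard : (Fintype.card ι : ℝ) ≠ 0 := Nat.cast_ne_zero.2 Fintype.card_ne_zero
  calc q * d ≤ q * (-A + ∑ i, g i + T) := mul_le_mul_of_nonneg_left hd hq0
    _ = -(q * A) + ∑ i, q * g i + q * T := by rw [← mul_sum]; ring
    _ ≤ -(q * A) + ∑ i, (gt i + q * (A / (2 * Fintype.card ι))) + T := by
        gcongr with i
        · exact hg i
        · exact mul_le_of_le_one_left hT hq1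
    _ = -(q * A / 2) + ∑ i, gt i + T := by
        rw [sum_add_distrib, sum_const, card_univ, nsmul_eq_mul]
        field_simp
        ring

lemma exists_rescaled_lyapunov {E ι : Type*} [NormedAddCommGroup E] [NormedSpace ℝ E]
    [Fintype ι] [Nonempty ι] {V : E → ℝ} (hV : Differentiable ℝ V) (hV0 : ∀ p, 0 ≤ V p)
    {α : ℝ → ℝ} (hα : ClassKInf α) {γ γt : ι → ℝ → ℝ} (hγ : ∀ i, ClassKInf (γ i))
    (hγt : ∀ i, ClassKInf (γt i)) (hO : ∀ i, ∃ M > 0, ∃ r₀, ∀ r ≥ r₀, γ i r ≤ M * γt i r) :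
    ∃ ρ αt : ℝ → ℝ, ContDiff ℝ 1 ρ ∧ ClassKInf ρ ∧ ClassKInf αt ∧
      ∀ p w (a : ι → ℝ) T, (∀ i, 0 ≤ a i) → 0 ≤ T →
        fderiv ℝ V p w ≤ -α (V p) + ∑ i, γ i (a i) + T →
        fderiv ℝ (ρ ∘ V) p w ≤ -αt (ρ (V p)) + ∑ i, γt i (a i) + T := by
  obtain ⟨q, hq, hqm, hq0, hqpos, hq1, hqγ⟩ := exists_dissipation_weight hγ hγt
    (hα.div_const (c := 2 * Fintype.card ι) (by positivity)) hO
  refine ⟨rescaling q, fun t => min (q 1) t * α t / 2, contDiff_rescaling hq,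
    classKInf_rescaling hq hqm hqpos, (hα.min_const_mul (hqpos 1 one_pos)).div_const two_pos,
    fun p w a T ha hT hVw => ?_⟩
  have hderiv : HasFDerivAt (rescaling q ∘ V) (q (V p) • fderiv ℝ V p) p :=
    (hasDerivAt_rescaling hq (V p)).comp_hasFDerivAt p (hV p).hasFDerivAt
  rw [hderiv.fderiv, smul_apply, smul_eq_mul]
  have := weighted_dissipation_le (hq0 (V p)) (hq1 (V p)) hT hVw
    fun i => hqγ _ (hV0 p) i _ (ha i)
  have := min_mul_rescaling_le_mul hq hqm hq0 hq1 hα (hV0 p)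
  linarith

/-- Remark 1 of the paper: under the ISS-Lyapunov assumption, the gains `γᵢ` may
be replaced by any class-K∞ gains `γ̃ᵢ` dominating them at infinity, at the price
of a new Lyapunov function `W` and new decay/disturbance rates `α̃`, `θ̃`. -/
theorem stmt10
    (N nx nz nu nv : ℕ) (hN : 0 < N) (ny : Fin N → ℕ)
    (fp : EuclideanSpace ℝ (Fin nx) → EuclideanSpace ℝ (Fin nu) →
      EuclideanSpace ℝ (Fin nv) → EuclideanSpace ℝ (Fin nx))
    (fo : EuclideanSpace ℝ (Fin nz) → EuclideanSpace ℝ (Fin nu) →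
      (PiLp 2 fun i : Fin N => EuclideanSpace ℝ (Fin (ny i))) →
      (PiLp 2 fun i : Fin N => EuclideanSpace ℝ (Fin (ny i))) →
      EuclideanSpace ℝ (Fin nz))
    (h : EuclideanSpace ℝ (Fin nx) →
      PiLp 2 fun i : Fin N => EuclideanSpace ℝ (Fin (ny i)))
    (ψ : EuclideanSpace ℝ (Fin nz) → EuclideanSpace ℝ (Fin nx))
    (ψR : EuclideanSpace ℝ (Fin nx) → EuclideanSpace ℝ (Fin nz))
    -- ISS-Lyapunov assumption (Assumption 2)
    (V : EuclideanSpace ℝ (Fin nx) × EuclideanSpace ℝ (Fin nz) → ℝ)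
    (αlow αup α θ : ℝ → ℝ) (γ : Fin N → ℝ → ℝ)
    (hV1 : ContDiff ℝ 1 V) (hV0 : ∀ p, 0 ≤ V p)
    (hαlow : ClassKInf αlow) (hαup : ClassKInf αup) (hα : ClassKInf α)
    (hθ : ClassKInf θ) (hγ : ∀ i, ClassKInf (γ i))
    (hVb : ∀ (x : EuclideanSpace ℝ (Fin nx)) (z : EuclideanSpace ℝ (Fin nz)),
      αlow ‖x - ψ z‖ ≤ V (x, z) ∧ V (x, z) ≤ αup ‖ψR x - z‖)
    (hVflow : ∀ (x : EuclideanSpace ℝ (Fin nx)) (z : EuclideanSpace ℝ (Fin nz))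
      (u : EuclideanSpace ℝ (Fin nu)) (v : EuclideanSpace ℝ (Fin nv))
      (e : PiLp 2 fun i : Fin N => EuclideanSpace ℝ (Fin (ny i))),
      fderiv ℝ V (x, z) (fp x u v, fo z u (h x + e) (h (ψ z))) ≤
        -α (V (x, z)) + (∑ i, γ i ‖e i‖) + θ ‖v‖)
    (γt : Fin N → ℝ → ℝ) (hγt : ∀ i, ClassKInf (γt i))
    (hO : ∀ i, ∃ M > (0:ℝ), ∃ r₀ ≥ (0:ℝ), ∀ r ≥ r₀, γ i r ≤ M * γt i r) :
    ∃ (W : EuclideanSpace ℝ (Fin nx) × EuclideanSpace ℝ (Fin nz) → ℝ)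
      (αlowW αupW αt θt : ℝ → ℝ),
      ContDiff ℝ 1 W ∧ (∀ p, 0 ≤ W p) ∧
      ClassKInf αlowW ∧ ClassKInf αupW ∧ ClassKInf αt ∧ ClassKInf θt ∧
      (∀ (x : EuclideanSpace ℝ (Fin nx)) (z : EuclideanSpace ℝ (Fin nz)),
        αlowW ‖x - ψ z‖ ≤ W (x, z) ∧ W (x, z) ≤ αupW ‖ψR x - z‖) ∧
      (∀ (x : EuclideanSpace ℝ (Fin nx)) (z : EuclideanSpace ℝ (Fin nz))
        (u : EuclideanSpace ℝ (Fin nu)) (v : EuclideanSpace ℝ (Fin nv))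
        (e : PiLp 2 fun i : Fin N => EuclideanSpace ℝ (Fin (ny i))),
        fderiv ℝ W (x, z) (fp x u v, fo z u (h x + e) (h (ψ z))) ≤
          -αt (W (x, z)) + (∑ i, γt i ‖e i‖) + θt ‖v‖) := by
  have : Nonempty (Fin N) := ⟨⟨0, hN⟩⟩
  obtain ⟨ρ, αt, hρ1, hρ, hαt, hdiss⟩ :=
    exists_rescaled_lyapunov (hV1.differentiable one_ne_zero) hV0 hα hγ hγt
      fun i => by obtain ⟨M, hM, r₀, -, hr₀⟩ := hO i; exact ⟨M, hM, r₀, hr₀⟩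
  have hρm := hρ.2.1.monotoneOn
  refine ⟨ρ ∘ V, ρ ∘ αlow, ρ ∘ αup, αt, θ, hρ1.comp hV1, fun p => hρ.nonneg (hV0 p),
    hρ.comp hαlow, hρ.comp hαup, hαt, hθ, fun x z => ?_, fun x z u v e =>
      hdiss _ _ (fun i => ‖e i‖) _ (fun i => norm_nonneg _) (hθ.nonneg (norm_nonneg v))
        (hVflow x z u v e)⟩
  obtain ⟨hlow, hup⟩ := hVb x z
  exact ⟨hρm (hαlow.nonneg (norm_nonneg _)) (hV0 _) hlow,
    hρm (hV0 _) (hαup.nonneg (norm_nonneg _)) hup⟩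
end

section
/- Under the ISS-Lyapunov assumption and with parameters chosen as in Theorem 1 (ν > 0; σᵢ* > 0, cᵢ* ≥ 0 with σᵢ*cᵢ* < 1; dᵢ > σᵢ*/(1−σᵢ*cᵢ*); εᵢ* > 0 with Σ(1+dᵢcᵢ*)εᵢ* ≤ ν; σᵢ ∈ [0,σᵢ*], cᵢ ∈ [0,cᵢ*], εᵢ ∈ (0,εᵢ*]; δᵢ := dᵢ − σᵢ*(1+dᵢcᵢ*); d̄ := max{d₁,…,d_N}), suppose additionally that α is subadditive, i.e., α(s₁+s₂) ≤ α(s₁) + α(s₂) for all s₁, s₂ ≥ 0, that the class-K∞ functions αᵢ satisfy αᵢ(s/(d̄N)) ≥ α(s)/δᵢ for all s ≥ 0 and all i, and let α_U be any class-K∞ function with α_U ≤ α pointwise. Then, for all x, z, u, v, e = (e₁,…,e_N) and all η ∈ ℝ^N with ηᵢ ≥ 0 satisfying γᵢ(|eᵢ|) ≤ σᵢαᵢ(ηᵢ) + εᵢ for every i, ⟨∇V(x,z), (f_p(x,u,v), f_o(z,u,h(x)+e, h(ψ(z))))⟩ + Σ_{i=1}^N dᵢ(−αᵢ(ηᵢ)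 + cᵢγᵢ(|eᵢ|)) ≤ −α_U(V(x,z) + Σ_{i=1}^N dᵢηᵢ) + ν + θ(|v|). -/
open Real Filter MeasureTheory

lemma kinf_nonneg {f : ℝ → ℝ} (hf : ClassKInf f) {s : ℝ} (hs : 0 ≤ s) : 0 ≤ f s := by
  have := hf.2.1.monotoneOn Set.self_mem_Ici (Set.mem_Ici.mpr hs) hs
  simpa [hf.2.2.1] using this

lemma kinf_mono {f : ℝ → ℝ} (hf : ClassKInf f) {s t : ℝ} (hs : 0 ≤ s) (hst : s ≤ t) :
    f s ≤ f t :=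
  hf.2.1.monotoneOn (Set.mem_Ici.mpr hs) (Set.mem_Ici.mpr (hs.trans hst)) hst

/-- Lemma 3 (Appendix) of the paper, subadditive case: if `α` is subadditive and
each `αᵢ` satisfies `αᵢ(s/(d̄N)) ≥ α(s)/δᵢ`, then any class-K∞ decay rate
`α_U ≤ α` is recovered globally for `U = V + Σ dᵢηᵢ` on the flow set. -/
theorem stmt12
    (N nx nz nu nv : ℕ) (hN : 0 < N) (ny : Fin N → ℕ)
    (fp : EuclideanSpace ℝ (Fin nx) → EuclideanSpace ℝ (Fin nu) →
      EuclideanSpace ℝ (Fin nv) → EuclideanSpace ℝ (Fin nx))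
    (fo : EuclideanSpace ℝ (Fin nz) → EuclideanSpace ℝ (Fin nu) →
      (PiLp 2 fun i : Fin N => EuclideanSpace ℝ (Fin (ny i))) →
      (PiLp 2 fun i : Fin N => EuclideanSpace ℝ (Fin (ny i))) →
      EuclideanSpace ℝ (Fin nz))
    (h : EuclideanSpace ℝ (Fin nx) →
      PiLp 2 fun i : Fin N => EuclideanSpace ℝ (Fin (ny i)))
    (ψ : EuclideanSpace ℝ (Fin nz) → EuclideanSpace ℝ (Fin nx))
    (ψR : EuclideanSpace ℝ (Fin nx) → EuclideanSpace ℝ (Fin nz))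
    -- ISS-Lyapunov assumption (Assumption 2)
    (V : EuclideanSpace ℝ (Fin nx) × EuclideanSpace ℝ (Fin nz) → ℝ)
    (αlow αup α θ : ℝ → ℝ) (γ : Fin N → ℝ → ℝ)
    (hV1 : ContDiff ℝ 1 V) (hV0 : ∀ p, 0 ≤ V p)
    (hαlow : ClassKInf αlow) (hαup : ClassKInf αup) (hα : ClassKInf α)
    (hθ : ClassKInf θ) (hγ : ∀ i, ClassKInf (γ i))
    (hVb : ∀ (x : EuclideanSpace ℝ (Fin nx)) (z : EuclideanSpace ℝ (Fin nz)),
      αlow ‖x - ψ z‖ ≤ V (x, z) ∧ V (x, z) ≤ αup ‖ψR x - z‖)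
    (hVflow : ∀ (x : EuclideanSpace ℝ (Fin nx)) (z : EuclideanSpace ℝ (Fin nz))
      (u : EuclideanSpace ℝ (Fin nu)) (v : EuclideanSpace ℝ (Fin nv))
      (e : PiLp 2 fun i : Fin N => EuclideanSpace ℝ (Fin (ny i))),
      fderiv ℝ V (x, z) (fp x u v, fo z u (h x + e) (h (ψ z))) ≤
        -α (V (x, z)) + (∑ i, γ i ‖e i‖) + θ ‖v‖)
    -- parameter selection of Theorem 1
    (ν : ℝ) (hν : 0 < ν)
    (σs cs d εs : Fin N → ℝ)
    (hσs : ∀ i, 0 < σs i) (hcs : ∀ i, 0 ≤ cs i) (hσscs : ∀ i, σs i * cs i < 1)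
    (hd : ∀ i, σs i / (1 - σs i * cs i) < d i)
    (hεs : ∀ i, 0 < εs i) (hεν : ∑ i, (1 + d i * cs i) * εs i ≤ ν)
    (αi : Fin N → ℝ → ℝ) (hαi : ∀ i, ClassKInf (αi i))
    (σ c ε b : Fin N → ℝ)
    (hσ : ∀ i, σ i ∈ Set.Icc 0 (σs i)) (hc : ∀ i, c i ∈ Set.Icc 0 (cs i))
    (hε : ∀ i, ε i ∈ Set.Ioc 0 (εs i)) (hb : ∀ i, b i ∈ Set.Icc 0 1)
    (δ : Fin N → ℝ) (hδ : ∀ i, δ i = d i - σs i * (1 + d i * cs i))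
    (dbar : ℝ)
    (hdbar : dbar = Finset.univ.sup'
      (Finset.univ_nonempty_iff.mpr (Fin.pos_iff_nonempty.mp hN)) d)
    (hsubadd : ∀ s₁ s₂ : ℝ, 0 ≤ s₁ → 0 ≤ s₂ → α (s₁ + s₂) ≤ α s₁ + α s₂)
    (hαibig : ∀ (i : Fin N) (s : ℝ), 0 ≤ s → α s / δ i ≤ αi i (s / (dbar * (N : ℝ))))
    (αUf : ℝ → ℝ) (hαUf : ClassKInf αUf)
    (hαUle : ∀ s : ℝ, 0 ≤ s → αUf s ≤ α s) :
    ∀ (x : EuclideanSpace ℝ (Fin nx)) (z : EuclideanSpace ℝ (Fin nz))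
      (u : EuclideanSpace ℝ (Fin nu)) (v : EuclideanSpace ℝ (Fin nv))
      (e : PiLp 2 fun i : Fin N => EuclideanSpace ℝ (Fin (ny i)))
      (η : Fin N → ℝ), (∀ i, 0 ≤ η i) →
      (∀ i, γ i ‖e i‖ ≤ σ i * αi i (η i) + ε i) →
      fderiv ℝ V (x, z) (fp x u v, fo z u (h x + e) (h (ψ z))) +
          ∑ i, d i * (-(αi i (η i)) + c i * γ i ‖e i‖) ≤
        -αUf (V (x, z) + ∑ i, d i * η i) + ν + θ ‖v‖ := by

  intro x z u v e η hη hγe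
  have hdpos : ∀ i, 0 < d i := fun i => by
    have h1 : 0 < 1 - σs i * cs i := by linarith [hσscs i]
    have := hd i
    have h2 : 0 < σs i / (1 - σs i * cs i) := div_pos (hσs i) h1
    linarith
  have hδpos : ∀ i, 0 < δ i := fun i => by
    have h1 : 0 < 1 - σs i * cs i := by linarith [hσscs i]
    have h2 := (div_lt_iff₀ h1).mp (hd i)
    rw [hδ i]; nlinarith
  have hαinn : ∀ i, 0 ≤ αi i (η i) := fun i => kinf_nonneg (hαi i) (hη i)
  have hγnn : ∀ i, 0 ≤ γ i ‖e i‖ := fun i => kinf_nonneg (hγ i) (norm_nonneg _)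
  set S := ∑ i, d i * η i with hS
  have hSnn : 0 ≤ S := Finset.sum_nonneg fun i _ =>
    mul_nonneg (hdpos i).le (hη i)
  have hV0' : 0 ≤ V (x, z) := hV0 _
  -- max index
  obtain ⟨i0, -, hi0⟩ := Finset.exists_max_image (Finset.univ : Finset (Fin N)) η
    (Finset.univ_nonempty_iff.mpr (Fin.pos_iff_nonempty.mp hN))
  have hdbar_le : ∀ i, d i ≤ dbar := fun i => by
    rw [hdbar]; exact Finset.le_sup' d (Finset.mem_univ i)
  have hdbarpos : 0 < dbar := lt_of_lt_of_le (hdpos i0) (hdbar_le i0)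
  have hNpos : (0:ℝ) < (N:ℝ) := by exact_mod_cast hN
  have hSle : S ≤ dbar * (N:ℝ) * η i0 := by
    calc S ≤ ∑ _i : Fin N, dbar * η i0 := Finset.sum_le_sum fun i _ => by
            have := hi0 i (Finset.mem_univ i)
            have h1 : d i * η i ≤ dbar * η i :=
              mul_le_mul_of_nonneg_right (hdbar_le i) (hη i)
            have h2 : dbar * η i ≤ dbar * η i0 :=
              mul_le_mul_of_nonneg_left this hdbarpos.le
            linarith
      _ = (N:ℝ) * (dbar * η i0) := by simp [Finset.sum_const, mul_comm]
      _ = dbar * (N:ℝ) * η i0 := by ring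
  -- α S ≤ ∑ δ i * αi i (η i)
  have hαS : α S ≤ ∑ i, δ i * αi i (η i) := by
    have h1 : α S / δ i0 ≤ αi i0 (S / (dbar * (N:ℝ))) := hαibig i0 S hSnn
    have h2 : αi i0 (S / (dbar * (N:ℝ))) ≤ αi i0 (η i0) := by
      apply kinf_mono (hαi i0)
      · exact div_nonneg hSnn (by positivity)
      · rw [div_le_iff₀ (by positivity)]; linarith [hSle]
    have h3 : α S ≤ δ i0 * αi i0 (η i0) := by
      have := (div_le_iff₀ (hδpos i0)).mp (h1.trans h2)
      linarith
    refine h3.trans (Finset.single_le_sum (f := fun i => δ i * αi i (η i))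
      (fun i _ => mul_nonneg (hδpos i).le (hαinn i)) (Finset.mem_univ i0))
  -- termwise bound
  have hterm : ∀ i, γ i ‖e i‖ + d i * (-(αi i (η i)) + c i * γ i ‖e i‖)
      ≤ -(δ i * αi i (η i)) + (1 + d i * cs i) * εs i := by
    intro i
    have hγi := hγe i
    obtain ⟨hσ0, hσ1⟩ := hσ i
    obtain ⟨hc0, hc1⟩ := hc i
    obtain ⟨hε0, hε1⟩ := hε i
    have hδi := hδ i
    have hdi := (hdpos i).le
    have hγb : γ i ‖e i‖ ≤ σs i * αi i (η i) + εs i := by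
      have : σ i * αi i (η i) ≤ σs i * αi i (η i) :=
        mul_le_mul_of_nonneg_right hσ1 (hαinn i)
      linarith
    nlinarith [mul_le_mul_of_nonneg_left hγb (mul_nonneg hdi (hcs i)),
      mul_le_mul_of_nonneg_right (mul_le_mul_of_nonneg_left hc1 hdi) (hγnn i),
      hαinn i, hσs i]
  have hsum : (∑ i, γ i ‖e i‖) + ∑ i, d i * (-(αi i (η i)) + c i * γ i ‖e i‖)
      ≤ -(∑ i, δ i * αi i (η i)) + ν := by
    have := Finset.sum_le_sum (fun i (_ : i ∈ Finset.univ) => hterm i)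
    simp only [Finset.sum_add_distrib, Finset.sum_neg_distrib] at this
    linarith [hεν]
  have hflow := hVflow x z u v e
  have hsub : α (V (x, z) + S) ≤ α (V (x, z)) + α S := hsubadd _ _ hV0' hSnn
  have hU : αUf (V (x, z) + S) ≤ α (V (x, z)) + ∑ i, δ i * αi i (η i) := by
    calc αUf (V (x, z) + S) ≤ α (V (x, z) + S) := hαUle _ (by linarith)
      _ ≤ α (V (x, z)) + α S := hsub
      _ ≤ _ := by linarith [hαS]
  linarith [hflow, hsum, hU]
end
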